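/- Assume f_i ≠ 0 for all i. Let s be a TRB signature (the signature of some TRB pair) that is not initial, i.e., s ∉ {E_1,…,E_d}. Then there exist two TRB pairs whose J-pair [m,p] is signed s, i.e., m·sig(p) = s. -/

import Mathlib

namespace TRB

open MvPolynomial
open scoped Classical

/-- Monomials in the variables `x₁, …, xₙ`, identified with their exponent vectors;
a monomial `m₁` divides `m₂` iff the exponent vector of `m₁` is componentwise `≤`. -/
abbrev Mon (n : ℕ) := Fin n →₀ ℕ

/-- Module monomials (signatures) `x^α E_i` of the free module `P^d`. -/
abbrev Sig (n d : ℕ) := Mon n × Fin d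

/-- The action of a monomial on a module monomial: `m • (x^α E_i) = (m x^α) E_i`. -/
noncomputable def Sig.smul {n d : ℕ} (m : Mon n) (s : Sig n d) : Sig n d := (m + s.1, s.2)

/-- An admissible monomial order on the monomials of `P = K[x₁,…,xₙ]`:
a (strict) linear order such that `1 ⪯ m` for every monomial `m`, and
multiplication by a monomial is strictly monotone. -/
structure MonOrder (n : ℕ) where
  lt : Mon n → Mon n → Prop
  irrefl : ∀ a, ¬ lt a a
  trans : ∀ a b c, lt a b → lt b c → lt a c
  total : ∀ a b, lt a b ∨ a = b ∨ lt b a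
  zero_lt : ∀ a, a ≠ 0 → lt 0 a
  mul_lt_mul : ∀ (m a b : Mon n), lt a b → lt (m + a) (m + b)

/-- An admissible signature order on module monomials:
a (strict) linear order with `s ⪯ m • s` for every monomial `m`, and such that
multiplication by a monomial is strictly monotone. -/
structure SigOrder (n d : ℕ) where
  lt : Sig n d → Sig n d → Prop
  irrefl : ∀ s, ¬ lt s s
  trans : ∀ s t r, lt s t → lt t r → lt s r
  total : ∀ s t, lt s t ∨ s = t ∨ lt t s
  le_smul : ∀ (m : Mon n) (s : Sig n d), s = Sig.smul m s ∨ lt s (Sig.smul m s)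
  smul_lt_smul : ∀ (m : Mon n) (s t : Sig n d), lt s t → lt (Sig.smul m s) (Sig.smul m t)

/-- Non-strict version of a monomial order. -/
def MonOrder.le {n : ℕ} (mo : MonOrder n) (a b : Mon n) : Prop := mo.lt a b ∨ a = b

/-- Non-strict version of a signature order. -/
def SigOrder.le {n d : ℕ} (so : SigOrder n d) (s t : Sig n d) : Prop := so.lt s t ∨ s = t

/-- The `≺_m`-leading monomial of a polynomial (junk value `0` on the zero polynomial). -/
noncomputable def MonOrder.lm {n : ℕ} {K : Type*} [CommSemiring K] (mo : MonOrder n)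
    (v : MvPolynomial (Fin n) K) : Mon n :=
  if h : ∃ m ∈ v.support, ∀ m' ∈ v.support, m' ≠ m → mo.lt m' m then h.choose else 0

/-- The signature of a module element `u ∈ P^d`: the `≺_s`-largest module monomial
`x^α E_i` whose coefficient in `u` is nonzero (junk value on `u = 0`). -/
noncomputable def SigOrder.sig {n d : ℕ} [NeZero d] {K : Type*} [CommSemiring K]
    (so : SigOrder n d) (u : Fin d → MvPolynomial (Fin n) K) : Sig n d :=
  if h : ∃ s : Sig n d, (u s.2).coeff s.1 ≠ 0 ∧
      ∀ t : Sig n d, (u t.2).coeff t.1 ≠ 0 → t ≠ s → so.lt t s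
  then h.choose else (0, ⟨0, Nat.pos_of_ne_zero (NeZero.ne d)⟩)

/-- The ambient type of candidate pairs `(u, v) ∈ P^d × P`. -/
abbrev PairT (K : Type*) [CommSemiring K] (n d : ℕ) :=
  (Fin d → MvPolynomial (Fin n) K) × MvPolynomial (Fin n) K

variable {K : Type*} [Field K] {n d : ℕ}

/-- `(u, v)` is a pair (w.r.t. the input `f`) if `u ⬝ f = Σ_i u_i f_i = v`. -/
def IsPair (f : Fin d → MvPolynomial (Fin n) K) (p : PairT K n d) : Prop :=
  ∑ i, p.1 i * f i = p.2

/-- Leading monomial of a pair: `lm p = lm v`. -/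
noncomputable def lmP (mo : MonOrder n) (p : PairT K n d) : Mon n := mo.lm p.2

/-- Signature of a pair: `sig p = sig u`. -/
noncomputable def sigP [NeZero d] (so : SigOrder n d) (p : PairT K n d) : Sig n d :=
  so.sig p.1

/-- The pair order: `p ≺_p q` iff `lm(p)·sig(q) ≺_s lm(q)·sig(p)`. -/
def PairLt [NeZero d] (mo : MonOrder n) (so : SigOrder n d) (p q : PairT K n d) : Prop :=
  so.lt (Sig.smul (lmP mo p) (sigP so q)) (Sig.smul (lmP mo q) (sigP so p))

/-- Pairs are similar if `lm(p)·sig(q) = lm(q)·sig(p)`. -/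
def Similar [NeZero d] (mo : MonOrder n) (so : SigOrder n d) (p q : PairT K n d) : Prop :=
  Sig.smul (lmP mo p) (sigP so q) = Sig.smul (lmP mo q) (sigP so p)

/-- `p ⪯_p q`. -/
def PairLE [NeZero d] (mo : MonOrder n) (so : SigOrder n d) (p q : PairT K n d) : Prop :=
  PairLt mo so p q ∨ Similar mo so p q

/-- Pairs are equivalent if they have the same signature and the same leading monomial. -/
def Equivalent [NeZero d] (mo : MonOrder n) (so : SigOrder n d) (p q : PairT K n d) : Prop :=
  sigP so p = sigP so q ∧ lmP mo p = lmP mo q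

/-- `p` is top reducible by `q`: both non-syzygy, `p ≺_p q` and `lm(q) ∣ lm(p)`. -/
def TopRed [NeZero d] (mo : MonOrder n) (so : SigOrder n d) (p q : PairT K n d) : Prop :=
  p.2 ≠ 0 ∧ q.2 ≠ 0 ∧ PairLt mo so p q ∧ lmP mo q ≤ lmP mo p

/-- A TRP pair: a non-syzygy pair that is top reducible by no pair. -/
def IsTRP [NeZero d] (f : Fin d → MvPolynomial (Fin n) K) (mo : MonOrder n)
    (so : SigOrder n d) (p : PairT K n d) : Prop :=
  IsPair f p ∧ p.2 ≠ 0 ∧ ∀ q : PairT K n d, IsPair f q → ¬ TopRed mo so p q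

/-- Divisibility of signatures: `x^α E_i ∣ x^β E_j` iff `i = j` and `x^α ∣ x^β`. -/
def SigDvd {n d : ℕ} (s t : Sig n d) : Prop := s.2 = t.2 ∧ s.1 ≤ t.1

/-- A TRB pair: a TRP pair `p` such that no TRP pair similar to `p` has signature
properly dividing `sig p`. -/
def IsTRB [NeZero d] (f : Fin d → MvPolynomial (Fin n) K) (mo : MonOrder n)
    (so : SigOrder n d) (p : PairT K n d) : Prop :=
  IsTRP f mo so p ∧ ∀ q : PairT K n d, IsTRP f mo so q → Similar mo so p q →
    SigDvd (sigP so q) (sigP so p) → sigP so q = sigP so p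

/-- A signature is syzygy if it is the signature of a syzygy pair `(u, 0)`, `u ≠ 0`. -/
def IsSyzygySig [NeZero d] (f : Fin d → MvPolynomial (Fin n) K) (so : SigOrder n d)
    (s : Sig n d) : Prop :=
  ∃ u : Fin d → MvPolynomial (Fin n) K, u ≠ 0 ∧ IsPair f (u, 0) ∧ so.sig u = s

/-- The sub-order `≺_{s,i}` on monomials: `x^α ≺_{s,i} x^β` iff `x^α E_i ≺_s x^β E_i`. -/
def SubOrder {n d : ℕ} (so : SigOrder n d) (i : Fin d) (a b : Mon n) : Prop :=
  so.lt (a, i) (b, i)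

/-- The sub-order `≺_{s,i}` coincides with `≺_m`. -/
def EqOrders {n d : ℕ} (so : SigOrder n d) (mo : MonOrder n) (i : Fin d) : Prop :=
  ∀ a b : Mon n, SubOrder so i a b ↔ mo.lt a b

/-- `≺_m` and `≺_s` are almost compatible: either every sub-order `≺_{s,i}` coincides
with `≺_m`, or there is exactly one index `k` with `≺_{s,k} ≠ ≺_m`, and this `k`
satisfies `x^α E_k ≺_s E_i` for every monomial `x^α` and every index `i ≠ k`. -/
def AlmostCompatible {n d : ℕ} (mo : MonOrder n) (so : SigOrder n d) : Prop :=
  (∀ i, EqOrders so mo i) ∨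
  (∃ k, ¬ EqOrders so mo k ∧ (∀ i, i ≠ k → EqOrders so mo i) ∧
    ∀ (a : Mon n) (i : Fin d), i ≠ k → so.lt (a, k) ((0 : Mon n), i))

/-- `≺_m` and `≺_s` are compatible: `s₁ ⪯_s s₂` and `m₁ ⪯_m m₂` imply
`m₁·s₁ ⪯_s m₂·s₂`, with equality only when `s₁ = s₂` and `m₁ = m₂`. -/
def Compatible {n d : ℕ} (mo : MonOrder n) (so : SigOrder n d) : Prop :=
  ∀ (s₁ s₂ : Sig n d) (m₁ m₂ : Mon n), so.le s₁ s₂ → mo.le m₁ m₂ →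
    so.le (Sig.smul m₁ s₁) (Sig.smul m₂ s₂) ∧
    (Sig.smul m₁ s₁ = Sig.smul m₂ s₂ → s₁ = s₂ ∧ m₁ = m₂)

/-- The multiplied pair `m·p = (X^m · u, X^m · v)`. -/
noncomputable def mulPair (m : Mon n) (p : PairT K n d) : PairT K n d :=
  (fun i => monomial m (1 : K) * p.1 i, monomial m (1 : K) * p.2)

/-- `[m, p]` is the J-pair of the non-similar non-syzygy pairs `p₁, p₂`:
`p` is the `≺_p`-smaller of the two and `m·lm(p) = lcm(lm p₁, lm p₂)`. -/
def IsJPair [NeZero d] (mo : MonOrder n) (so : SigOrder n d) (p₁ p₂ : PairT K n d)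
    (m : Mon n) (p : PairT K n d) : Prop :=
  p₁.2 ≠ 0 ∧ p₂.2 ≠ 0 ∧ ¬ Similar mo so p₁ p₂ ∧
  ((PairLt mo so p₁ p₂ ∧ p = p₁) ∨ (PairLt mo so p₂ p₁ ∧ p = p₂)) ∧
  m + lmP mo p = lmP mo p₁ ⊔ lmP mo p₂

/-- `G` is a Gröbner basis of the ideal `⟨f₁,…,f_d⟩` w.r.t. `≺_m`: `G` consists of
elements of the ideal, and for every nonzero `v` in the ideal there is a nonzero
`g ∈ G` with `lm g ∣ lm v`. -/
def IsGroebnerBasis (mo : MonOrder n) (f : Fin d → MvPolynomial (Fin n) K)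
    (G : Set (MvPolynomial (Fin n) K)) : Prop :=
  (∀ g ∈ G, g ∈ Ideal.span (Set.range f)) ∧
  ∀ v ∈ Ideal.span (Set.range f), v ≠ 0 →
    ∃ g ∈ G, g ≠ 0 ∧ mo.lm g ≤ mo.lm v


/-!
Among the TRB pairs `p` with a proper multiple `t·p` (`t ≠ 1`) signed `s`, take one with
`t·lm(p)` `≺_m`-minimal; candidates exist because `E_i` (where `s = x^β E_i`) is itself a TRB
signature, and `≺_m` is well founded by Dickson's lemma.

Two non-syzygy pairs with the same signature can be subtracted so that the signature term
cancels; hence a TRP pair has the least leading monomial among the pairs of its signature, and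
every other pair of that signature with a different leading monomial is top reducible. The
multiple `t·p` has signature `s`, and its leading monomial differs from that of the TRB pair
signed `s` (otherwise the two would be similar, with `sig p` properly dividing `s`). So `t·p` is
top reducible, and then also by some TRB pair `r`.

If `lcm(lm r, lm p) = t·lm p`, then `[t, p]` is the J-pair of `r` and `p`. Otherwise `t = x_j t'`
with `lm r ∣ t'·lm p`, so `t'·p` is still top reducible by `r`; the TRP pair signed `t'·sig p`
then has a smaller leading monomial than `t'·p`, and its TRB divisor gives a candidate below
`t·lm p`.
-/

section Leading

variable {τ : Type*} (r : τ → τ → Prop)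

/-- With `g` the coefficients of a polynomial this describes `MonOrder.lm`, with `g = coeffAt u`
it describes `SigOrder.sig`. -/
def IsLeading (g : τ → K) (m : τ) : Prop := g m ≠ 0 ∧ ∀ t, g t ≠ 0 → t ≠ m → r t m

def SupportedBelow (g : τ → K) (m : τ) : Prop := ∀ t, g t ≠ 0 → r t m

variable {r} {g h : τ → K} {m m' : τ}

theorem IsLeading.map {φ : τ → τ} (hφ : ∀ a b, r a b → r (φ a) (φ b)) {g' : τ → K}
    (hcomp : ∀ t, g' (φ t) = g t) (hrange : ∀ t, g' t ≠ 0 → ∃ s, φ s = t)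
    (hm : IsLeading r g m) : IsLeading r g' (φ m) := by
  refine ⟨(hcomp m).symm ▸ hm.1, fun t ht hne => ?_⟩
  obtain ⟨s, rfl⟩ := hrange t ht
  rw [hcomp] at ht
  exact hφ s m (hm.2 s ht fun h => hne (h ▸ rfl))

theorem IsLeading.supportedBelow_cancel (hg : IsLeading r g m) (hh : IsLeading r h m) :
    SupportedBelow r (fun t => h m * g t - g m * h t) m := by
  intro t ht
  have hne : t ≠ m := by rintro rfl; exact ht (by ring)
  by_cases hgt : g t = 0
  · exact hh.2 t (fun hht => ht (by simp [hgt, hht])) hne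
  · exact hg.2 t hgt hne

variable [IsStrictTotalOrder τ r]

theorem exists_isLeading (hfin : {t | g t ≠ 0}.Finite) (hg : g ≠ 0) : ∃ m, IsLeading r g m := by
  obtain ⟨t₀, ht₀⟩ := Function.ne_iff.mp hg
  obtain ⟨⟨m, hm⟩, -, hmax⟩ := (hfin.wellFoundedOn (r := Function.swap r)).has_min Set.univ
    ⟨⟨t₀, ht₀⟩, trivial⟩
  refine ⟨m, hm, fun t ht hne => ?_⟩
  rcases trichotomous (r := r) t m with htm | rfl | hmt
  · exact htm
  · exact absurd rfl hne
  · exact absurd hmt (hmax ⟨t, ht⟩ trivial)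

theorem IsLeading.eq (hm : IsLeading r g m) (hm' : IsLeading r g m') : m = m' := by
  by_contra hne
  exact asymm (hm.2 m' hm'.1 (Ne.symm hne)) (hm'.2 m hm.1 hne)

theorem IsLeading.supportedBelow_of_lt (hm : IsLeading r g m) (hlt : r m m') :
    SupportedBelow r g m' := fun t ht =>
  (eq_or_ne t m).elim (fun h => h ▸ hlt) fun h => _root_.trans (hm.2 t ht h) hlt

theorem IsLeading.mul_sub_mul (hg : IsLeading r g m) (hh : SupportedBelow r h m) {a : K}
    (ha : a ≠ 0) (b : K) : IsLeading r (fun t => a * g t - b * h t) m := by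
  have hhm : h m = 0 := by_contra fun hm => irrefl m (hh m hm)
  refine ⟨by simpa [hhm] using mul_ne_zero ha hg.1, fun t ht hne => ?_⟩
  by_cases hgt : g t = 0
  · exact hh t fun hht => ht (by simp [hgt, hht])
  · exact hg.2 t hgt hne

end Leading

theorem wellFounded_of_wellQuasiOrdered {α : Type*} {r q : α → α → Prop} [IsStrictOrder α r]
    (hq : WellQuasiOrdered q) (h : ∀ a b, q a b → ¬ r b a) : WellFounded r := by
  rw [RelEmbedding.wellFounded_iff_isEmpty]
  refine ⟨fun e => ?_⟩
  obtain ⟨a, b, hab, hq⟩ := hq e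
  exact h _ _ hq (e.map_rel_iff.2 hab)

namespace MonOrder

variable (mo : MonOrder n)

instance : IsStrictTotalOrder (Mon n) mo.lt where
  trichotomous a b hab hba := ((mo.total a b).resolve_left hab).resolve_right hba
  irrefl := mo.irrefl
  trans := mo.trans

variable {mo} {a b : Mon n}

theorem not_lt_of_le (h : a ≤ b) : ¬ mo.lt b a := by
  obtain ⟨c, rfl⟩ := le_iff_exists_add.mp h
  rcases eq_or_ne c 0 with rfl | hc
  · simpa using mo.irrefl a
  · exact asymm (by simpa using mo.mul_lt_mul a 0 c (mo.zero_lt c hc))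

variable (mo) in
theorem wellFounded : WellFounded mo.lt :=
  wellFounded_of_wellQuasiOrdered wellQuasiOrdered_le fun _ _ => not_lt_of_le

end MonOrder

theorem Sig.smul_add (a b : Mon n) (s : Sig n d) :
    Sig.smul (a + b) s = Sig.smul a (Sig.smul b s) := by
  simp [Sig.smul, add_assoc]

theorem Sig.smul_comm (a b : Mon n) (s : Sig n d) :
    Sig.smul a (Sig.smul b s) = Sig.smul b (Sig.smul a s) := by
  rw [← Sig.smul_add, ← Sig.smul_add, add_comm]

theorem Sig.smul_left_injective (s : Sig n d) : Function.Injective fun a : Mon n => Sig.smul a s :=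
  fun _ _ h => add_right_cancel (congrArg Prod.fst h)

theorem Sig.smul_right_injective (a : Mon n) : Function.Injective (Sig.smul (d := d) a) :=
  fun _ _ h => by simpa [Sig.smul, Prod.ext_iff] using h

theorem Sig.smul_eq_self_iff {a : Mon n} {s : Sig n d} : Sig.smul a s = s ↔ a = 0 := by
  simp [Sig.smul, Prod.ext_iff]

theorem SigDvd.exists_smul_eq {s t : Sig n d} (h : SigDvd s t) : ∃ a, Sig.smul a s = t := by
  obtain ⟨a, ha⟩ := le_iff_exists_add.mp h.2
  exact ⟨a, Prod.ext (ha.trans (add_comm _ _)).symm h.1⟩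

theorem sigDvd_smul (a : Mon n) (s : Sig n d) : SigDvd s (Sig.smul a s) :=
  ⟨rfl, le_add_self⟩

namespace SigOrder

variable (so : SigOrder n d)

instance : IsStrictTotalOrder (Sig n d) so.lt where
  trichotomous a b hab hba := ((so.total a b).resolve_left hab).resolve_right hba
  irrefl := so.irrefl
  trans := so.trans

variable {so} {s t : Sig n d} {m : Mon n}

theorem lt_of_smul_lt_smul (h : so.lt (Sig.smul m s) (Sig.smul m t)) : so.lt s t := by
  rcases trichotomous (r := so.lt) s t with hst | rfl | hts
  · exact hst
  · exact absurd h (so.irrefl _)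
  · exact absurd (so.smul_lt_smul m t s hts) (asymm h)

theorem lt_of_sigDvd_of_ne (h : SigDvd s t) (hne : s ≠ t) : so.lt s t := by
  obtain ⟨a, rfl⟩ := h.exists_smul_eq
  exact (so.le_smul a s).resolve_left hne

theorem smul_tsub_lt_smul_tsub {a b l : Mon n} (ha : a ≤ l) (hb : b ≤ l)
    (h : so.lt (Sig.smul a s) (Sig.smul b t)) :
    so.lt (Sig.smul (l - b) s) (Sig.smul (l - a) t) := by
  apply so.lt_of_smul_lt_smul (m := a + b)
  have e₁ : a + b + (l - b) = l + a := by rw [add_assoc, add_tsub_cancel_of_le hb, add_comm]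
  have e₂ : a + b + (l - a) = l + b := by
    rw [add_comm a b, add_assoc, add_tsub_cancel_of_le ha, add_comm]
  rw [← Sig.smul_add, ← Sig.smul_add, e₁, e₂, Sig.smul_add, Sig.smul_add l]
  exact so.smul_lt_smul l _ _ h

theorem not_lt_of_sigDvd (h : SigDvd s t) : ¬ so.lt t s := by
  obtain ⟨a, rfl⟩ := h.exists_smul_eq
  rcases so.le_smul a s with h | h
  · exact h ▸ so.irrefl _
  · exact asymm h

variable (so) in
theorem wellFounded : WellFounded so.lt := by
  refine wellFounded_of_wellQuasiOrdered (q := SigDvd) (fun e => ?_) fun _ _ => not_lt_of_sigDvd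
  obtain ⟨a, b, hab, hle, hidx⟩ :=
    (wellQuasiOrdered_le.prod (Finite.wellQuasiOrdered (· = ·))) e
  exact ⟨a, b, hab, hidx, hle⟩

end SigOrder

def coeffAt (u : Fin d → MvPolynomial (Fin n) K) (t : Sig n d) : K := (u t.2).coeff t.1

theorem coeff_smul_sub_smul (a b : K) (v w : MvPolynomial (Fin n) K) :
    (coeff · (a • v - b • w)) = fun m => a * coeff m v - b * coeff m w := by
  funext m
  simp [coeff_sub, coeff_smul]

theorem coeffAt_smul_sub_smul (a b : K) (u w : Fin d → MvPolynomial (Fin n) K) :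
    coeffAt (a • u - b • w) = fun t => a * coeffAt u t - b * coeffAt w t := by
  funext t
  simp [coeffAt, coeff_sub, coeff_smul]

namespace MonOrder

variable (mo : MonOrder n) {v : MvPolynomial (Fin n) K} {l : Mon n}

theorem isLeading_lm (hv : v ≠ 0) : IsLeading mo.lt (coeff · v) (mo.lm v) := by
  obtain ⟨m, hm⟩ := exists_isLeading (r := mo.lt) (g := (coeff · v))
    (v.support.finite_toSet.subset fun t ht => mem_support_iff.mpr ht)
    fun h => hv (MvPolynomial.ext _ _ (congrFun h))
  have h : ∃ m ∈ v.support, ∀ m' ∈ v.support, m' ≠ m → mo.lt m' m :=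
    ⟨m, mem_support_iff.mpr hm.1, fun m' hm' => hm.2 m' (mem_support_iff.mp hm')⟩
  obtain ⟨h₁, h₂⟩ := h.choose_spec
  simp only [MonOrder.lm, dif_pos h]
  exact ⟨mem_support_iff.mp h₁, fun t ht => h₂ t (mem_support_iff.mpr ht)⟩

variable {mo}

theorem lm_eq_of_isLeading (h : IsLeading mo.lt (coeff · v) l) : mo.lm v = l :=
  (mo.isLeading_lm fun hv => h.1 (by simp [hv])).eq h

end MonOrder

theorem IsLeading.monomial_mul {mo : MonOrder n} {v : MvPolynomial (Fin n) K} {l : Mon n}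
    (h : IsLeading mo.lt (coeff · v) l) (m : Mon n) :
    IsLeading mo.lt (coeff · (monomial m (1 : K) * v)) (m + l) := by
  refine h.map (mo.mul_lt_mul m) (fun t => by simp [coeff_monomial_mul]) fun t ht => ?_
  rw [coeff_monomial_mul'] at ht
  split_ifs at ht with hle
  · exact ⟨t - m, add_tsub_cancel_of_le hle⟩
  · exact absurd rfl ht

namespace SigOrder

variable [NeZero d] (so : SigOrder n d) {u : Fin d → MvPolynomial (Fin n) K} {s : Sig n d}

theorem isLeading_sig (hu : u ≠ 0) : IsLeading so.lt (coeffAt u) (so.sig u) := by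
  have hfin : {t | coeffAt u t ≠ 0}.Finite :=
    (Set.finite_iUnion fun i => (u i).support.finite_toSet.image (·, i)).subset
      fun t ht => Set.mem_iUnion.mpr ⟨t.2, t.1, mem_support_iff.mpr ht, rfl⟩
  obtain ⟨m, hm⟩ := exists_isLeading (r := so.lt) hfin fun h => hu (funext fun i =>
    MvPolynomial.ext _ _ fun a => congrFun h (a, i))
  have h : ∃ s : Sig n d, (u s.2).coeff s.1 ≠ 0 ∧
      ∀ t : Sig n d, (u t.2).coeff t.1 ≠ 0 → t ≠ s → so.lt t s := ⟨m, hm⟩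
  simp only [SigOrder.sig, dif_pos h]
  exact h.choose_spec

variable {so}

theorem sig_eq_of_isLeading (h : IsLeading so.lt (coeffAt u) s) : so.sig u = s :=
  (so.isLeading_sig fun hu => h.1 (by simp [hu, coeffAt])).eq h

end SigOrder

theorem IsLeading.monomial_smul {so : SigOrder n d} {u : Fin d → MvPolynomial (Fin n) K}
    {s : Sig n d} (h : IsLeading so.lt (coeffAt u) s) (m : Mon n) :
    IsLeading so.lt (coeffAt fun i => monomial m (1 : K) * u i) (Sig.smul m s) := by
  refine h.map (so.smul_lt_smul m) (fun t => by simp [coeffAt, Sig.smul, coeff_monomial_mul])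
    fun t ht => ?_
  simp only [coeffAt, coeff_monomial_mul'] at ht
  split_ifs at ht with hle
  · exact ⟨(t.1 - m, t.2), Prod.ext (add_tsub_cancel_of_le hle) rfl⟩
  · exact absurd rfl ht

section Pairs

variable {mo : MonOrder n} {f : Fin d → MvPolynomial (Fin n) K} {p q r : PairT K n d}

theorem IsPair.fst_ne_zero (hp : IsPair f p) (h : p.2 ≠ 0) : p.1 ≠ 0 := by
  intro h1
  apply h
  rw [← hp, h1]
  simp

theorem IsPair.smul_sub_smul (hp : IsPair f p) (hq : IsPair f q) (a b : K) :
    IsPair f (a • p - b • q) := by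
  unfold IsPair at *
  simp only [Prod.fst_sub, Prod.snd_sub, Prod.smul_fst, Prod.smul_snd, Pi.sub_apply,
    Pi.smul_apply, sub_mul, smul_mul_assoc, Finset.sum_sub_distrib, ← Finset.smul_sum, hp, hq]

theorem IsPair.mulPair (hp : IsPair f p) (m : Mon n) : IsPair f (mulPair m p) := by
  unfold IsPair TRB.mulPair at *
  simp only [mul_assoc, ← Finset.mul_sum, hp]

theorem mulPair_snd_ne_zero (hp : p.2 ≠ 0) (m : Mon n) : (mulPair m p).2 ≠ 0 :=
  mul_ne_zero (by simp) hp

theorem mulPair_fst_ne_zero (hp : p.1 ≠ 0) (m : Mon n) : (mulPair m p).1 ≠ 0 := by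
  obtain ⟨i, hi⟩ := Function.ne_iff.mp hp
  exact Function.ne_iff.mpr ⟨i, mul_ne_zero (by simp) hi⟩

theorem lmP_mulPair (hp : p.2 ≠ 0) (m : Mon n) : lmP mo (mulPair m p) = m + lmP mo p :=
  MonOrder.lm_eq_of_isLeading ((mo.isLeading_lm hp).monomial_mul m)

variable [NeZero d] {so : SigOrder n d}

theorem sigP_mulPair (hp : p.1 ≠ 0) (m : Mon n) :
    sigP so (mulPair m p) = Sig.smul m (sigP so p) :=
  SigOrder.sig_eq_of_isLeading ((so.isLeading_sig hp).monomial_smul m)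

theorem sigP_single (i : Fin d) (v : MvPolynomial (Fin n) K) :
    sigP so ((Pi.single i 1, v) : PairT K n d) = (0, i) := by
  refine SigOrder.sig_eq_of_isLeading ⟨by simp [coeffAt], fun t ht hne => absurd ?_ hne⟩
  by_cases hi : t.2 = i
  · have h0 : 0 = t.1 := by simpa [coeffAt, hi, coeff_one] using ht
    exact Prod.ext h0.symm hi
  · simp [coeffAt, hi] at ht

theorem pairLt_mulPair_left_iff (hp : IsPair f p) (hp2 : p.2 ≠ 0) (m : Mon n) :
    PairLt mo so (mulPair m p) q ↔ PairLt mo so p q := by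
  unfold PairLt
  rw [lmP_mulPair hp2 m, sigP_mulPair (hp.fst_ne_zero hp2) m, Sig.smul_add,
    Sig.smul_comm (lmP mo q) m]
  exact ⟨so.lt_of_smul_lt_smul, so.smul_lt_smul m _ _⟩

theorem PairLt.trans (h₁ : PairLt mo so p q) (h₂ : PairLt mo so q r) : PairLt mo so p r := by
  unfold PairLt at *
  apply so.lt_of_smul_lt_smul (m := lmP mo q)
  have h₁' := so.smul_lt_smul (lmP mo r) _ _ h₁
  have h₂' := so.smul_lt_smul (lmP mo p) _ _ h₂
  rw [Sig.smul_comm (lmP mo p) (lmP mo r)] at h₂'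
  rw [Sig.smul_comm (lmP mo q) (lmP mo p), Sig.smul_comm (lmP mo q) (lmP mo r)]
  exact so.trans _ _ _ h₂' h₁'

theorem PairLt.of_similar_right (h : PairLt mo so p q) (hsim : Similar mo so q r) :
    PairLt mo so p r := by
  unfold PairLt Similar at *
  apply so.lt_of_smul_lt_smul (m := lmP mo q)
  rw [Sig.smul_comm (lmP mo q) (lmP mo p), hsim, Sig.smul_comm (lmP mo p),
    Sig.smul_comm (lmP mo q) (lmP mo r)]
  exact so.smul_lt_smul _ _ _ h

theorem PairLt.not_similar (h : PairLt mo so p q) : ¬ Similar mo so q p := fun hsim =>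
  so.irrefl _ (by unfold PairLt Similar at *; rwa [hsim] at h)

theorem Similar.trans (h₁ : Similar mo so p q) (h₂ : Similar mo so q r) : Similar mo so p r := by
  unfold Similar at *
  apply Sig.smul_right_injective (lmP mo q)
  rw [Sig.smul_comm (lmP mo q) (lmP mo p), h₂, Sig.smul_comm (lmP mo p), h₁, Sig.smul_comm]

theorem Similar.exists_of_sigDvd (hsim : Similar mo so p q) (h : SigDvd (sigP so q) (sigP so p)) :
    ∃ ε, Sig.smul ε (sigP so q) = sigP so p ∧ lmP mo p = ε + lmP mo q := by
  obtain ⟨ε, hε⟩ := h.exists_smul_eq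
  refine ⟨ε, hε, ?_⟩
  unfold Similar at hsim
  rw [← hε, ← Sig.smul_add] at hsim
  rw [Sig.smul_left_injective _ hsim, add_comm]

theorem TopRed.trans (h₁ : TopRed mo so p q) (h₂ : TopRed mo so q r) : TopRed mo so p r :=
  ⟨h₁.1, h₂.2.1, h₁.2.2.1.trans h₂.2.2.1, h₂.2.2.2.trans h₁.2.2.2⟩

end Pairs

section Reduction

variable [NeZero d] {mo : MonOrder n} {so : SigOrder n d} {f : Fin d → MvPolynomial (Fin n) K}
  {p q r P ps : PairT K n d} {t : Mon n}

theorem exists_smul_sub_smul_supportedBelow (hp : p.1 ≠ 0) (hq : q.1 ≠ 0)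
    (h : sigP so p = sigP so q) :
    ∃ a b : K, a ≠ 0 ∧ SupportedBelow so.lt (coeffAt (a • p - b • q).1) (sigP so p) := by
  have hp' : IsLeading so.lt (coeffAt p.1) (sigP so q) := by
    rw [← h]
    exact so.isLeading_sig hp
  have hq' := so.isLeading_sig hq
  refine ⟨coeffAt q.1 (sigP so q), coeffAt p.1 (sigP so q), hq'.1, ?_⟩
  rw [h, Prod.fst_sub, Prod.smul_fst, Prod.smul_fst, coeffAt_smul_sub_smul]
  exact hp'.supportedBelow_cancel hq'

theorem exists_topRed_of_sigP_eq (hp : IsPair f p) (hq : IsPair f q) (hp2 : p.2 ≠ 0)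
    (hq1 : q.1 ≠ 0) (hsig : sigP so p = sigP so q)
    (hbelow : SupportedBelow mo.lt (coeff · q.2) (lmP mo p)) :
    ∃ w, IsPair f w ∧ TopRed mo so p w := by
  -- `a • p - b • q` loses the signature term but keeps the leading monomial of `p`
  obtain ⟨a, b, ha, hw⟩ := exists_smul_sub_smul_supportedBelow (hp.fst_ne_zero hp2) hq1 hsig
  have hwpair := hp.smul_sub_smul hq a b
  have hlm : IsLeading mo.lt (coeff · (a • p - b • q).2) (lmP mo p) := by
    rw [Prod.snd_sub, Prod.smul_snd, Prod.smul_snd, coeff_smul_sub_smul]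
    exact (mo.isLeading_lm hp2).mul_sub_mul hbelow ha b
  have hw2 : (a • p - b • q).2 ≠ 0 := fun h0 => hlm.1 (by simp [h0])
  have hwlm : lmP mo (a • p - b • q) = lmP mo p := MonOrder.lm_eq_of_isLeading hlm
  refine ⟨_, hwpair, hp2, hw2, ?_, hwlm.le⟩
  unfold PairLt
  rw [hwlm]
  exact so.smul_lt_smul _ _ _ (hw _ (so.isLeading_sig (hwpair.fst_ne_zero hw2)).1)

theorem IsTRP.not_lmP_lt (hp : IsTRP f mo so p) (hq : IsPair f q) (hq2 : q.2 ≠ 0)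
    (hsig : sigP so q = sigP so p) : ¬ mo.lt (lmP mo q) (lmP mo p) := fun hlt =>
  have ⟨w, hw, hred⟩ := exists_topRed_of_sigP_eq hp.1 hq hp.2.1 (hq.fst_ne_zero hq2) hsig.symm
    ((mo.isLeading_lm hq2).supportedBelow_of_lt hlt)
  hp.2.2 w hw hred

theorem IsTRP.exists_topRed_of_lmP_ne (hp : IsTRP f mo so p) (hq : IsPair f q) (hq2 : q.2 ≠ 0)
    (hsig : sigP so q = sigP so p) (hne : lmP mo q ≠ lmP mo p) :
    ∃ w, IsPair f w ∧ TopRed mo so q w := by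
  have hlt : mo.lt (lmP mo p) (lmP mo q) :=
    ((trichotomous (r := mo.lt) _ _).resolve_left (hp.not_lmP_lt hq hq2 hsig)).resolve_left hne
  exact exists_topRed_of_sigP_eq hq hp.1 hq2 (hp.1.fst_ne_zero hp.2.1) hsig
    ((mo.isLeading_lm hp.2.1).supportedBelow_of_lt hlt)

theorem IsTRP.lmP_lt_of_topRed (hq : IsTRP f mo so q) (hP : IsPair f P)
    (hsig : sigP so q = sigP so P) (hr : IsPair f r) (hred : TopRed mo so P r) :
    mo.lt (lmP mo q) (lmP mo P) := by
  rcases trichotomous (r := mo.lt) (lmP mo q) (lmP mo P) with hlt | heq | hgt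
  · exact hlt
  · refine absurd ⟨hq.2.1, hred.2.1, ?_, heq ▸ hred.2.2.2⟩ (hq.2.2 r hr)
    unfold PairLt
    rw [hsig, heq]
    exact hred.2.2.1
  · exact absurd hgt (hq.not_lmP_lt hP hred.1 hsig.symm)

theorem IsTRP.not_isSyzygySig (hp : IsTRP f mo so p) {S : Sig n d}
    (hS : SigDvd S (sigP so p)) : ¬ IsSyzygySig f so S := by
  rintro ⟨u, hu, hz, rfl⟩
  obtain ⟨δ, hδ⟩ := hS.exists_smul_eq
  have hzsig : sigP so (mulPair δ ((u, 0) : PairT K n d)) = sigP so p :=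
    (sigP_mulPair (p := (u, 0)) hu δ).trans hδ
  obtain ⟨w, hw, hred⟩ := exists_topRed_of_sigP_eq hp.1 (hz.mulPair δ) hp.2.1
    (mulPair_fst_ne_zero (p := (u, 0)) hu δ) hzsig.symm fun m hm => absurd (by simp [mulPair]) hm
  exact hp.2.2 w hw hred

theorem TopRed.exists_reduct (hq : IsPair f q) (hr : IsPair f r) (hred : TopRed mo so q r) :
    ∃ w, IsPair f w ∧ IsLeading so.lt (coeffAt w.1) (sigP so q) ∧
      SupportedBelow mo.lt (coeff · w.2) (lmP mo q) := by
  obtain ⟨hq2, hr2, hlt, hdvd⟩ := hred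
  obtain ⟨δ, hδ⟩ := le_iff_exists_add.mp hdvd
  have hR : IsLeading mo.lt (coeff · (mulPair δ r).2) (lmP mo q) := by
    rw [hδ, add_comm]
    exact (mo.isLeading_lm hr2).monomial_mul δ
  have hRsig : so.lt (sigP so (mulPair δ r)) (sigP so q) := by
    rw [sigP_mulPair (hr.fst_ne_zero hr2)]
    apply so.lt_of_smul_lt_smul (m := lmP mo r)
    rw [← Sig.smul_add, ← hδ]
    exact hlt
  refine ⟨_, hq.smul_sub_smul (hr.mulPair δ) ((mulPair δ r).2.coeff (lmP mo q))
    (q.2.coeff (lmP mo q)), ?_, ?_⟩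
  · rw [Prod.fst_sub, Prod.smul_fst, Prod.smul_fst, coeffAt_smul_sub_smul]
    exact (so.isLeading_sig (hq.fst_ne_zero hq2)).mul_sub_mul
      ((so.isLeading_sig (mulPair_fst_ne_zero (hr.fst_ne_zero hr2) δ)).supportedBelow_of_lt hRsig)
      hR.1 _
  · rw [Prod.snd_sub, Prod.smul_snd, Prod.smul_snd, coeff_smul_sub_smul]
    exact (mo.isLeading_lm hq2).supportedBelow_cancel hR

theorem exists_isTRP_sigP_eq (hf : ∀ i, f i ≠ 0) {S : Sig n d} (hS : ¬ IsSyzygySig f so S) :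
    ∃ q, IsTRP f mo so q ∧ sigP so q = S := by
  set e : PairT K n d := mulPair S.1 (Pi.single S.2 1, f S.2)
  have he : IsPair f e := IsPair.mulPair (by simp [IsPair, Pi.single_apply]) _
  have hesig : sigP so e = S := by
    rw [sigP_mulPair (by simp) _, sigP_single]
    simp [Sig.smul]
  obtain ⟨_, ⟨q, hq, hq2, hqS, rfl⟩, hmin⟩ := mo.wellFounded.has_min
    {l | ∃ q, IsPair f q ∧ q.2 ≠ 0 ∧ sigP so q = S ∧ lmP mo q = l}
    ⟨_, e, he, mulPair_snd_ne_zero (hf S.2) _, hesig, rfl⟩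
  -- reducing `q` would give a syzygy signed `S` or a pair signed `S` with smaller `lm`
  refine ⟨q, ⟨hq, hq2, fun r hr hred => ?_⟩, hqS⟩
  obtain ⟨w, hw, hwsig, hwlm⟩ := hred.exists_reduct hq hr
  have hw1 : w.1 ≠ 0 := fun h0 => hwsig.1 (by simp [h0, coeffAt])
  have hwS : sigP so w = S := (SigOrder.sig_eq_of_isLeading hwsig).trans hqS
  by_cases hw2 : w.2 = 0
  · exact hS ⟨w.1, hw1, Eq.trans hw hw2, hwS⟩
  · exact hmin _ ⟨w, hw, hw2, hwS, rfl⟩ (hwlm _ (mo.isLeading_lm hw2).1)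

theorem IsTRP.exists_isTRB (hq : IsTRP f mo so q) :
    ∃ q', IsTRB f mo so q' ∧ Similar mo so q q' ∧ SigDvd (sigP so q') (sigP so q) := by
  obtain ⟨_, ⟨q', hq', hsim, hdvd, rfl⟩, hmin⟩ := so.wellFounded.has_min
    {σ | ∃ q', IsTRP f mo so q' ∧ Similar mo so q q' ∧ SigDvd (sigP so q') (sigP so q) ∧
      sigP so q' = σ} ⟨_, q, hq, rfl, ⟨rfl, le_rfl⟩, rfl⟩
  refine ⟨q', ⟨hq', fun r hr hsim' hdvd' => by_contra fun hne => ?_⟩, hsim, hdvd⟩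
  exact hmin _ ⟨r, hr, hsim.trans hsim', ⟨hdvd'.1.trans hdvd.1, hdvd'.2.trans hdvd.2⟩, rfl⟩
    (so.lt_of_sigDvd_of_ne hdvd' hne)

theorem exists_isTRB_topRed (h : ∃ r, IsPair f r ∧ TopRed mo so P r) :
    ∃ r, IsTRB f mo so r ∧ TopRed mo so P r := by
  obtain ⟨_, ⟨r, ⟨hr, hred⟩, rfl⟩, hmin⟩ := so.wellFounded.has_min
    {σ | ∃ r, (IsPair f r ∧ TopRed mo so P r) ∧ Sig.smul (lmP mo P - lmP mo r) (sigP so r) = σ}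
    (let ⟨r, hr⟩ := h; ⟨_, r, hr, rfl⟩)
  -- a reducer of `r` would also reduce `P`, with a smaller multiplied signature
  have hrTRP : IsTRP f mo so r := by
    refine ⟨hr, hred.2.1, fun r' hr' hred' => hmin _ ⟨r', ⟨hr', hred.trans hred'⟩, rfl⟩ ?_⟩
    exact so.smul_tsub_lt_smul_tsub hred.2.2.2 (hred.trans hred').2.2.2 hred'.2.2.1
  obtain ⟨r', hr', hsim, hdvd⟩ := hrTRP.exists_isTRB
  obtain ⟨ε, -, hlm⟩ := hsim.exists_of_sigDvd hdvd
  exact ⟨r', hr', hred.1, hr'.1.2.1, hred.2.2.1.of_similar_right hsim,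
    (le_iff_exists_add.mpr ⟨ε, hlm.trans (add_comm _ _)⟩).trans hred.2.2.2⟩

theorem exists_isTRB_sigP_eq_zero (hf : ∀ i, f i ≠ 0) {i : Fin d}
    (hi : ¬ IsSyzygySig f so (0, i)) : ∃ q, IsTRB f mo so q ∧ sigP so q = (0, i) := by
  obtain ⟨q, hq, hqsig⟩ := exists_isTRP_sigP_eq (mo := mo) hf hi
  obtain ⟨q', hq', -, hdvd⟩ := hq.exists_isTRB
  rw [hqsig] at hdvd
  exact ⟨q', hq', Prod.ext (le_zero_iff.mp hdvd.2) hdvd.1⟩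

theorem exists_isTRB_smul_lt_of_topRed (hf : ∀ i, f i ≠ 0) (hP : IsPair f P)
    (hS : ¬ IsSyzygySig f so (sigP so P)) (hr : IsPair f r) (hred : TopRed mo so P r) :
    ∃ q ε, IsTRB f mo so q ∧ Sig.smul ε (sigP so q) = sigP so P ∧
      mo.lt (ε + lmP mo q) (lmP mo P) := by
  obtain ⟨q, hq, hqsig⟩ := exists_isTRP_sigP_eq (mo := mo) hf hS
  obtain ⟨q', hq', hsim, hdvd⟩ := hq.exists_isTRB
  obtain ⟨ε, hε, hlm⟩ := hsim.exists_of_sigDvd hdvd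
  exact ⟨q', ε, hq', hε.trans hqsig, hlm ▸ hq.lmP_lt_of_topRed hP hqsig hr hred⟩

theorem IsTRB.exists_topRed_mulPair (hps : IsTRB f mo so ps) (hp : IsTRP f mo so p) (ht : t ≠ 0)
    (hts : Sig.smul t (sigP so p) = sigP so ps) :
    ∃ w, IsPair f w ∧ TopRed mo so (mulPair t p) w := by
  have hp2 := hp.2.1
  refine hps.1.exists_topRed_of_lmP_ne (hp.1.mulPair t) (mulPair_snd_ne_zero hp2 t)
    ((sigP_mulPair (hp.1.fst_ne_zero hp2) t).trans hts) fun heq => ht ?_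
  rw [lmP_mulPair hp2 t] at heq
  have hsim : Similar mo so ps p := by
    unfold Similar
    rw [← heq, ← hts, Sig.smul_add, Sig.smul_comm]
  have hdvd : SigDvd (sigP so p) (sigP so ps) := hts ▸ sigDvd_smul t _
  exact Sig.smul_eq_self_iff.mp (hts.trans (hps.2 p hp hsim hdvd).symm)

theorem exists_add_eq_le_of_not_le_sup {a b t : Mon n} (ha : a ≤ t + b) (h : ¬ t + b ≤ a ⊔ b) :
    ∃ e t', e ≠ 0 ∧ e + t' = t ∧ a ≤ t' + b := by
  obtain ⟨j, hj⟩ : ∃ j, ¬ (t + b) j ≤ (a ⊔ b) j := by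
    simpa only [Finsupp.le_def, not_forall] using h
  simp only [Finsupp.sup_apply, Finsupp.add_apply, le_sup_iff, not_or, not_le] at hj
  refine ⟨Finsupp.single j 1, t - Finsupp.single j 1, by simp,
    add_tsub_cancel_of_le (Finsupp.single_le_iff.mpr (by omega)), fun k => ?_⟩
  have hk := ha k
  simp only [Finsupp.add_apply, Finsupp.tsub_apply, Finsupp.single_apply] at hk ⊢
  split_ifs with hjk
  · subst hjk
    omega
  · omega

theorem isJPair_or_exists_lt (hf : ∀ i, f i ≠ 0) (hps : IsTRP f mo so ps)
    (hp : IsTRB f mo so p) (hts : Sig.smul t (sigP so p) = sigP so ps) (hr : IsTRB f mo so r)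
    (hred : TopRed mo so (mulPair t p) r) :
    IsJPair mo so r p t p ∨ ∃ q ε, IsTRB f mo so q ∧ ε ≠ 0 ∧ Sig.smul ε (sigP so q) = sigP so ps ∧
      mo.lt (ε + lmP mo q) (t + lmP mo p) := by
  have hp2 := hp.1.2.1
  have hpr : PairLt mo so p r := (pairLt_mulPair_left_iff hp.1.1 hp2 t).1 hred.2.2.1
  have hrle : lmP mo r ≤ t + lmP mo p := lmP_mulPair hp2 t ▸ hred.2.2.2
  by_cases hsup : t + lmP mo p ≤ lmP mo r ⊔ lmP mo p
  · exact Or.inl ⟨hr.1.2.1, hp2, hpr.not_similar, Or.inr ⟨hpr, rfl⟩,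
      le_antisymm hsup (sup_le hrle le_add_self)⟩
  obtain ⟨e, t', he, rfl, hle⟩ := exists_add_eq_le_of_not_le_sup hrle hsup
  have hsig' : sigP so (mulPair t' p) = Sig.smul t' (sigP so p) :=
    sigP_mulPair (hp.1.1.fst_ne_zero hp2) t'
  have hdvd : SigDvd (sigP so (mulPair t' p)) (sigP so ps) := by
    rw [hsig', ← hts, Sig.smul_add]
    exact sigDvd_smul e _
  have hred' : TopRed mo so (mulPair t' p) r := ⟨mulPair_snd_ne_zero hp2 t', hr.1.2.1,
    (pairLt_mulPair_left_iff hp.1.1 hp2 t').2 hpr, lmP_mulPair hp2 t' ▸ hle⟩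
  obtain ⟨q, ε, hq, hεq, hlt⟩ := exists_isTRB_smul_lt_of_topRed hf (hp.1.1.mulPair t')
    (hps.not_isSyzygySig hdvd) hr.1.1 hred'
  refine Or.inr ⟨q, e + ε, hq, fun h0 => he (add_eq_zero.mp h0).1, ?_, ?_⟩
  · rw [Sig.smul_add, hεq, hsig', ← Sig.smul_add, hts]
  · rw [add_assoc, add_assoc]
    exact mo.mul_lt_mul e _ _ (lmP_mulPair hp2 t' ▸ hlt)

end Reduction

/-- Assume `f i ≠ 0` for all `i`. Let `s` be a TRB signature (the signature
of some TRB pair) that is not initial, i.e., `s ∉ {E_1,…,E_d}`. Then there exist two TRB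
pairs whose J-pair `[m, p]` is signed `s`, i.e., `m·sig p = s`. -/
theorem TRB_sig_is_JPair_sig {K : Type*} [Field K] {n d : ℕ} [NeZero d]
    (mo : MonOrder n) (so : SigOrder n d) (f : Fin d → MvPolynomial (Fin n) K)
    (hf : ∀ i, f i ≠ 0) (s : Sig n d)
    (hs : ∃ p : PairT K n d, IsTRB f mo so p ∧ sigP so p = s)
    (hni : s.1 ≠ 0) :
    ∃ (p₁ p₂ p : PairT K n d) (m : Mon n), IsTRB f mo so p₁ ∧ IsTRB f mo so p₂ ∧
      IsJPair mo so p₁ p₂ m p ∧ Sig.smul m (sigP so p) = s := by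
  obtain ⟨ps, hps, rfl⟩ := hs
  by_contra hgoal
  obtain ⟨q₀, hq₀, hq₀sig⟩ := exists_isTRB_sigP_eq_zero (mo := mo) hf
    (hps.1.not_isSyzygySig ⟨rfl, zero_le⟩)
  obtain ⟨_, ⟨p, t, hp, ht, hts, rfl⟩, hmin⟩ := mo.wellFounded.has_min
    {l | ∃ p t, IsTRB f mo so p ∧ t ≠ 0 ∧ Sig.smul t (sigP so p) = sigP so ps ∧ t + lmP mo p = l}
    ⟨_, q₀, _, hq₀, hni, by rw [hq₀sig]; simp [Sig.smul], rfl⟩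
  obtain ⟨r, hr, hred⟩ := exists_isTRB_topRed (hps.exists_topRed_mulPair hp.1 ht hts)
  rcases isJPair_or_exists_lt hf hps.1 hp hts hr hred with hJ | ⟨q, ε, hq, hε, hεq, hlt⟩
  · exact hgoal ⟨r, p, p, t, hr, hp, hJ, hts⟩
  · exact hmin _ ⟨q, ε, hq, hε, hεq, rfl⟩ hlt

end TRB
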